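/- Let n ≥ 3 be odd and let à be the (n+3)/2 × (n+3)/2 symmetric real matrix with Ã(1,1) = 0; Ã(1,j) = Ã(j,1) = √2 for 2 ≤ j ≤ (n+1)/2; Ã(1,(n+3)/2) = Ã((n+3)/2,1) = √n; Ã(j,j) = 1 and Ã(i,j) = 2 for distinct i,j in {2,…,(n+1)/2}; Ã((n+3)/2,(n+3)/2) = n-1; and Ã(j,(n+3)/2) = Ã((n+3)/2,j) = 0 for 2 ≤ j ≤ (n+1)/2. Then det(λI - Ã) = (λ+1)^((n-3)/2)·(λ³ + (3-2n)λ² + (n²-5n+3)λ + 2n² - 4n + 1). -/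

import Mathlib

open Matrix Polynomial

set_option synthInstance.maxHeartbeats 1000000
set_option maxHeartbeats 4000000

/-- The quotient matrix `Ã` of size `(n+3)/2` (for odd `n`): entry `(0,0)` is `0`;
entries `(0,j) = (j,0) = √2` for the middle indices `1 ≤ j ≤ (n-1)/2`;
`(0, last) = (last, 0) = √n` where `last = (n+1)/2`; among the middle indices the
diagonal is `1` and off-diagonal entries are `2`; `(last, last) = n - 1`; and the
entries between the middle indices and `last` are `0`. -/
noncomputable def Atilde (n : ℕ) : Matrix (Fin ((n + 3) / 2)) (Fin ((n + 3) / 2)) ℝ :=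
  Matrix.of fun i j =>
    if i.val = 0 ∧ j.val = 0 then 0
    else if i.val = 0 then (if j.val = (n + 1) / 2 then Real.sqrt n else Real.sqrt 2)
    else if j.val = 0 then (if i.val = (n + 1) / 2 then Real.sqrt n else Real.sqrt 2)
    else if i.val = (n + 1) / 2 ∧ j.val = (n + 1) / 2 then (n : ℝ) - 1
    else if i.val = (n + 1) / 2 ∨ j.val = (n + 1) / 2 then 0
    else if i = j then 1 else 2

/-! ### Auxiliary definitions -/

noncomputable def Bm (m : ℕ) : Matrix (Fin 3) (Fin 3) ℝ :=
  !![0, Real.sqrt 2, Real.sqrt ((2*m+3 : ℕ) : ℝ);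
     Real.sqrt 2, 1, 0;
     Real.sqrt ((2*m+3 : ℕ) : ℝ), 0, ((2*m+3 : ℕ) : ℝ) - 1]

noncomputable def wv : Fin 3 → ℝ := ![Real.sqrt 2, 2, 0]

noncomputable def M22 (m : ℕ) : Matrix (Fin m) (Fin m) ℝ :=
  Matrix.of fun i j => if i = j then 1 else 2

noncomputable def FB (m : ℕ) : Matrix (Fin 3 ⊕ Fin m) (Fin 3 ⊕ Fin m) ℝ :=
  fromBlocks (Bm m) (vecMulVec wv 1) (vecMulVec 1 wv) (M22 m)

local notation "K" => RatFunc ℝ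

noncomputable def tK : K := algebraMap (Polynomial ℝ) K X
noncomputable def Jm (m : ℕ) : Matrix (Fin m) (Fin m) K := Matrix.of fun _ _ => 1
noncomputable def aK : K := (tK + 1)⁻¹
noncomputable def bK (m : ℕ) : K := 2 / ((tK + 1) * (tK + 1 - 2*m))
noncomputable def Em (m : ℕ) : Matrix (Fin m) (Fin m) K := aK • 1 + bK m • Jm m
noncomputable def Dm (m : ℕ) : Matrix (Fin m) (Fin m) K :=
  (charmatrix (M22 m)).map (algebraMap (Polynomial ℝ) K)
noncomputable def cRh : ℝ →+* K :=
  (algebraMap (Polynomial ℝ) K).comp (Polynomial.C : ℝ →+* Polynomial ℝ)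
noncomputable def Umat (m : ℕ) : Matrix (Fin 3) (Fin m) K := Matrix.of fun i _ => -(cRh (wv i))
noncomputable def Vmat (m : ℕ) : Matrix (Fin m) (Fin 3) K := Matrix.of fun _ j => -(cRh (wv j))
noncomputable def BKmat (m : ℕ) : Matrix (Fin 3) (Fin 3) K :=
  (charmatrix (Bm m)).map (algebraMap (Polynomial ℝ) K)
noncomputable def σm (m : ℕ) : K := (m:K) * (aK + bK m * m)

/-! ### The reindexing equivalence -/

def idx (m : ℕ) : (Fin 3 ⊕ Fin m) ≃ Fin ((2*m+3 + 3) / 2) where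
  toFun x := Sum.elim
    (fun a => if a.val = 0 then ⟨0, by omega⟩ else if a.val = 1 then ⟨1, by omega⟩
       else ⟨m+2, by omega⟩)
    (fun j => ⟨j.val + 2, by have := j.isLt; omega⟩) x
  invFun i :=
    if h0 : i.val = 0 then .inl 0
    else if h1 : i.val = 1 then .inl 1
    else if h2 : i.val = m + 2 then .inl 2
    else .inr ⟨i.val - 2, by have := i.isLt; omega⟩
  left_inv := by
    rintro (a | j)
    · fin_cases a <;> simp <;> omega
    · have h0 : j.val + 2 ≠ 0 := by omega
      have h1 : j.val + 2 ≠ 1 := by omega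
      have h2 : j.val + 2 ≠ m + 2 := by have := j.isLt; omega
      simp [h0, h1, h2]
      have := j.isLt; omega
  right_inv := by
    intro i
    by_cases h0 : i.val = 0
    · simp [h0]; exact (Fin.ext h0.symm)
    · by_cases h1 : i.val = 1
      · simp [h0, h1]; exact (Fin.ext h1.symm)
      · by_cases h2 : i.val = m + 2
        · simp [h0, h1, h2]; exact (Fin.ext h2.symm)
        · simp [h0, h1, h2]; exact Fin.ext (by simp; omega)

lemma reindex_eq (m : ℕ) :
    reindex (idx m).symm (idx m).symm (Atilde (2*m+3)) = FB m := by
  ext x y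
  simp only [reindex_apply, submatrix_apply, Equiv.symm_symm]
  rcases x with a | j <;> rcases y with b | k
  · fin_cases a <;> fin_cases b <;>
      simp [Atilde, FB, Bm, idx, wv, M22, fromBlocks, show (2*m+3+1)/2 = m+2 by omega] <;> omega
  · have hk := k.isLt
    fin_cases a <;>
      simp [Atilde, FB, Bm, idx, wv, M22, fromBlocks, show (2*m+3+1)/2 = m+2 by omega] <;> omega
  · have hj := j.isLt
    fin_cases b <;>
      simp [Atilde, FB, Bm, idx, wv, M22, fromBlocks, show (2*m+3+1)/2 = m+2 by omega] <;> omega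
  · have hj := j.isLt; have hk := k.isLt
    simp [Atilde, FB, Bm, idx, wv, M22, fromBlocks,
      show (2*m+3+1)/2 = m+2 by omega]
    rw [if_neg (by omega), if_neg (by omega)]
    exact if_congr Fin.ext_iff.symm rfl rfl

/-! ### Facts over the rational function field -/

lemma ht : tK + 1 ≠ 0 := by
  have h : tK + 1 = algebraMap (Polynomial ℝ) K (X + 1) := by simp [tK]
  rw [h]
  simp only [ne_eq, map_eq_zero_iff _ (IsFractionRing.injective (Polynomial ℝ) K)]
  intro h
  have := congrArg (Polynomial.eval 0) h
  simp at this

lemma hd (m : ℕ) : tK + 1 - 2*m ≠ 0 := by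
  have h : tK + 1 - 2*m = algebraMap (Polynomial ℝ) K (X + C (1 - 2*(m:ℝ))) := by
    simp [tK, map_sub, map_add, map_ofNat]
    push_cast
    ring
  rw [h]
  simp only [ne_eq, map_eq_zero_iff _ (IsFractionRing.injective (Polynomial ℝ) K)]
  exact Polynomial.X_add_C_ne_zero _

lemma hD (m : ℕ) : Dm m = (tK + 1) • 1 + (-2:K) • Jm m := by
  ext i j
  by_cases h : i = j
  · subst h
    simp [Dm, charmatrix_apply_eq, M22, tK, Jm, Matrix.one_apply]
    ring
  · simp [Dm, charmatrix_apply_ne _ _ _ h, M22, h, tK, Jm, Matrix.one_apply, map_ofNat]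

lemma hJ (m : ℕ) : Jm m * Jm m = ((m:K)) • Jm m := by
  ext i j
  simp [Jm, Matrix.mul_apply, Finset.sum_const]

lemma mulJ (m : ℕ) (p q r s : K) :
    (p • (1 : Matrix (Fin m) (Fin m) K) + q • Jm m) * (r • 1 + s • Jm m)
      = (p*r) • 1 + (p*s + q*r + q*s*m) • Jm m := by
  simp only [Matrix.add_mul, Matrix.mul_add, Matrix.smul_mul, Matrix.mul_smul,
    Matrix.one_mul, Matrix.mul_one, hJ, smul_add, smul_smul, add_assoc, ← add_smul]
  congr 1
  · exact congrArg₂ _ (mul_comm r p) rfl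
  · congr 1
    ring

lemma hED (m : ℕ) : Em m * Dm m = 1 := by
  rw [Em, hD, mulJ]
  have h1 : aK * (tK + 1) = 1 := inv_mul_cancel₀ ht
  have h2 : aK * (-2) + bK m * (tK+1) + bK m * (-2) * m = 0 := by
    rw [aK, bK]
    field_simp [ht, hd m]
    ring
  rw [h1, h2]
  simp

lemma hDE (m : ℕ) : Dm m * Em m = 1 := by
  rw [Em, hD, mulJ]
  have h1 : (tK + 1) * aK = 1 := mul_inv_cancel₀ ht
  have h2 : (tK+1) * bK m + (-2) * aK + (-2) * bK m * m = 0 := by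
    rw [aK, bK]
    field_simp [ht, hd m]
    ring
  rw [h1, h2]
  simp

lemma detD (m : ℕ) : (Dm m).det = (tK + 1)^m * (1 - 2*m/(tK+1)) := by
  have h : Dm m = (tK + 1) • (1 + replicateCol Unit (fun _ => -(2/(tK+1))) * replicateRow Unit (fun _ => (1:K))) := by
    rw [hD]
    ext i j
    by_cases h : i = j <;>
      simp [h, Matrix.one_apply, Jm, Matrix.mul_apply, smul_eq_mul, Matrix.replicateCol, Matrix.replicateRow] <;>
      · field_simp [ht]
        try ring
  rw [h, Matrix.det_smul, Matrix.det_one_add_replicateCol_mul_replicateRow]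
  simp only [dotProduct, Finset.sum_const, Finset.card_fin, nsmul_eq_mul, one_mul,
    Fintype.card_fin]
  ring

lemma hUEV (m : ℕ) :
    Umat m * Em m * Vmat m = Matrix.of fun i j => σm m * (cRh (wv i) * cRh (wv j)) := by
  ext i j
  simp only [Matrix.mul_apply, Umat, Em, Vmat, Jm, Matrix.of_apply, Matrix.add_apply,
    Matrix.smul_apply, Matrix.one_apply, smul_eq_mul, mul_ite, mul_one, mul_zero, σm]
  simp only [Finset.sum_mul, Finset.mul_sum]
  rw [Finset.sum_comm]
  simp [Finset.sum_add_distrib, Finset.sum_ite_eq, Finset.mul_sum, Finset.sum_const,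
    Finset.card_fin, mul_add, add_mul, Finset.sum_ite_eq']
  ring

lemma hr2 : cRh (Real.sqrt 2) * cRh (Real.sqrt 2) = 2 := by
  rw [← _root_.map_mul, Real.mul_self_sqrt (by norm_num : (0:ℝ) ≤ 2)]
  exact map_ofNat _ 2

lemma detS (m : ℕ) :
    (BKmat m - Umat m * Em m * Vmat m).det =
      (tK - (2*(m:K)+2)) * ((tK - 2*σm m)*(tK - 1 - 4*σm m) - 2*(1+2*σm m)^2)
        - (2*(m:K)+3)*(tK - 1 - 4*σm m) := by
  rw [hUEV, Matrix.det_fin_three]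
  simp only [Matrix.sub_apply, Matrix.of_apply, BKmat, Matrix.map_apply]
  simp only [charmatrix_apply_eq, charmatrix_apply_ne _ _ _ (by decide : (0:Fin 3) ≠ 1),
    charmatrix_apply_ne _ _ _ (by decide : (0:Fin 3) ≠ 2),
    charmatrix_apply_ne _ _ _ (by decide : (1:Fin 3) ≠ 0),
    charmatrix_apply_ne _ _ _ (by decide : (1:Fin 3) ≠ 2),
    charmatrix_apply_ne _ _ _ (by decide : (2:Fin 3) ≠ 0),
    charmatrix_apply_ne _ _ _ (by decide : (2:Fin 3) ≠ 1)]
  norm_num [Bm, wv, Matrix.cons_val_zero, Matrix.cons_val_one, Matrix.head_cons, Matrix.cons_val_two, Matrix.tail_cons]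
  rw [show tK = RatFunc.X from RatFunc.algebraMap_X]
  have hc2 : cRh 2 = (2:K) := map_ofNat _ 2
  have hC2 : RatFunc.C (2:ℝ) = (2:K) := map_ofNat _ 2
  have hC3 : RatFunc.C (3:ℝ) = (3:K) := map_ofNat _ 3
  have H2 : cRh (Real.sqrt 2) * cRh (Real.sqrt 2) = 2 := hr2
  have Hn : RatFunc.C (Real.sqrt (2*(m:ℝ)+3)) * RatFunc.C (Real.sqrt (2*(m:ℝ)+3))
      = 2*(m:K)+3 := by
    rw [← _root_.map_mul, Real.mul_self_sqrt (by positivity), _root_.map_add, _root_.map_mul,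
      hC2, hC3, _root_.map_natCast]
  rw [hc2, hC2, hC3]
  rw [show RatFunc.C (Real.sqrt 2) = cRh (Real.sqrt 2) from (RatFunc.algebraMap_C _).symm]
  set s := σm m
  set r2 := cRh (Real.sqrt 2)
  set rn := RatFunc.C (Real.sqrt (2*(m:ℝ)+3))
  linear_combination (-(s*(RatFunc.X-1-4*s)*(RatFunc.X-(2*(m:K)+2)))
      - (RatFunc.X-(2*(m:K)+2))*(1+2*s)^2) * H2
    + (-(RatFunc.X-1-4*s)) * Hn

lemma final_scalar (m : ℕ) :
    (1 - 2*(m:K)/(tK+1)) *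
      ((tK - (2*(m:K)+2)) * ((tK - 2*((m:K)/(tK+1-2*(m:K))))*(tK - 1 - 4*((m:K)/(tK+1-2*(m:K))))
          - 2*(1+2*((m:K)/(tK+1-2*(m:K))))^2)
        - (2*(m:K)+3)*(tK - 1 - 4*((m:K)/(tK+1-2*(m:K))))) =
    tK^3 + (3 - 2*(2*(m:K)+3))*tK^2 + ((2*(m:K)+3)^2 - 5*(2*(m:K)+3) + 3)*tK
      + (2*(2*(m:K)+3)^2 - 4*(2*(m:K)+3) + 1) := by
  have h1 := ht
  have h2 := hd m
  field_simp [ht, hd m]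
  ring

lemma hσ (m : ℕ) : σm m = (m:K) / (tK + 1 - 2*(m:K)) := by
  rw [σm, aK, bK]
  have h1 := ht
  have h2 := hd m
  rw [eq_div_iff h2, inv_eq_one_div]
  rw [div_mul_eq_mul_div, div_add_div _ _ h1 (mul_ne_zero h1 h2), mul_div_assoc', div_mul_eq_mul_div, div_eq_iff (mul_ne_zero h1 (mul_ne_zero h1 h2))]
  ring

lemma key (m : ℕ) : (FB m).charpoly =
    (X+1)^m * (X^3 + C (3 - 2*((2*m+3:ℕ):ℝ))*X^2
      + C (((2*m+3:ℕ):ℝ)^2 - 5*((2*m+3:ℕ):ℝ) + 3)*X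
      + C (2*((2*m+3:ℕ):ℝ)^2 - 4*((2*m+3:ℕ):ℝ) + 1)) := by
  apply IsFractionRing.injective (Polynomial ℝ) K
  rw [Matrix.charpoly, RingHom.map_det]
  have hblocks : ((algebraMap (Polynomial ℝ) K).mapMatrix (charmatrix (FB m)))
      = fromBlocks (BKmat m) (Umat m) (Vmat m) (Dm m) := by
    rw [RingHom.mapMatrix_apply, FB, charmatrix_fromBlocks, Matrix.fromBlocks_map]
    ext (i|i) (j|j) <;>
      simp [Matrix.fromBlocks, BKmat, Umat, Vmat, Dm, vecMulVec, cRh]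
  rw [hblocks]
  letI : Invertible (Dm m) := ⟨Em m, hED m, hDE m⟩
  rw [Matrix.det_fromBlocks₂₂, show ⅟(Dm m) = Em m from rfl, detD, detS, hσ]
  simp only [_root_.map_mul, _root_.map_pow, _root_.map_add, _root_.map_one,
    RatFunc.algebraMap_C, _root_.map_sub, _root_.map_ofNat, _root_.map_natCast,
    show (algebraMap (Polynomial ℝ) K) X = tK from rfl]
  push_cast
  linear_combination ((tK+1)^m) * final_scalar m

/-- For odd `n ≥ 3`,
`det(λI - Ã) = (λ+1)^((n-3)/2) (λ³ + (3-2n)λ² + (n²-5n+3)λ + 2n² - 4n + 1)`. -/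
theorem charpoly_Atilde (n : ℕ) (hn : 3 ≤ n) (hodd : Odd n) :
    (Atilde n).charpoly =
      (X + 1) ^ ((n - 3) / 2) *
        (X ^ 3 + C (3 - 2 * (n : ℝ)) * X ^ 2 + C ((n : ℝ) ^ 2 - 5 * (n : ℝ) + 3) * X
          + C (2 * (n : ℝ) ^ 2 - 4 * (n : ℝ) + 1)) := by
  obtain ⟨k, hk⟩ := hodd
  obtain ⟨m, rfl⟩ : ∃ m, n = 2*m+3 := ⟨k - 1, by omega⟩
  have h1 : (Atilde (2*m+3)).charpoly = (FB m).charpoly :=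
    ((Matrix.charpoly_reindex (idx m).symm (Atilde (2*m+3))).symm).trans
      (congrArg Matrix.charpoly (reindex_eq m))
  rw [h1, key m, show (2*m+3-3)/2 = m by omega]
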